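/- Let α ∈ (0,1), C ≥ 0, and let ψ : S¹ → S¹ satisfy |ψ(ζ) − ζ| ≤ C·|ζ − 1|^{α+1} for every ζ ∈ S¹. Then for every t ∈ [0,1) and every ζ ∈ S¹, setting ω = h_t(ζ), one has |h_t^{-1}(ψ(ω)) − ζ| ≤ 4C·|ω − 1|^α. -/

import Mathlib

/-- The Möbius transformation `h_t(z) = (z + t)/(1 + t z)` of the unit disk,
for a real parameter `t`.  Its inverse is `h_{-t}`. -/
noncomputable def mobH (t : ℝ) (z : ℂ) : ℂ := (z + (t : ℂ)) / (1 + (t : ℂ) * z)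

/-! Writing `ω = h_t ζ`, we have `ζ = h_{-t} ω`, so the left-hand side is the image under `h_{-t}`
of the displacement `ψ ω - ω`. On the closed disk `h_{-t}` stretches distances to `ω` by at most
`(1 + t) / |1 - t ω|`, while `|ω - 1| ≤ 2 |1 - t ω|` on the circle; so one factor `|ω - 1|` of the
bound `C |ω - 1| ^ (α + 1)` absorbs the stretching. -/

namespace Mobius

variable {t : ℝ} {z u w : ℂ}

theorem one_sub_abs_le_norm_one_add_mul (hz : ‖z‖ ≤ 1) : 1 - |t| ≤ ‖1 + (t : ℂ) * z‖ := by
  have htz : ‖(t : ℂ) * z‖ ≤ |t| := by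
    rw [norm_mul, Complex.norm_real, Real.norm_eq_abs]
    exact mul_le_of_le_one_right (abs_nonneg t) hz
  have := norm_sub_norm_le (1 : ℂ) (-((t : ℂ) * z))
  rw [sub_neg_eq_add, norm_one, norm_neg] at this
  linarith

theorem one_add_mul_ne_zero (ht : |t| < 1) (hz : ‖z‖ ≤ 1) : 1 + (t : ℂ) * z ≠ 0 :=
  norm_pos_iff.mp (by linarith [one_sub_abs_le_norm_one_add_mul (t := t) hz])

theorem mobH_sub_mobH (hu : 1 + (t : ℂ) * u ≠ 0) (hw : 1 + (t : ℂ) * w ≠ 0) :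
    mobH t u - mobH t w = (u - w) * (1 - (t : ℂ) ^ 2) / ((1 + t * u) * (1 + t * w)) := by
  rw [mobH, mobH, div_sub_div _ _ hu hw]
  ring

theorem mobH_neg_mobH (ht : |t| < 1) (hz : ‖z‖ ≤ 1) : mobH (-t) (mobH t z) = z := by
  have hz' := one_add_mul_ne_zero ht hz
  have ht2 : (1 : ℂ) - (t : ℂ) ^ 2 ≠ 0 := by
    rw [← Complex.ofReal_pow, ← Complex.ofReal_one, ← Complex.ofReal_sub, Complex.ofReal_ne_zero]
    nlinarith [abs_nonneg t, sq_abs t]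
  have hnum : mobH t z + ((-t : ℝ) : ℂ) = z * (1 - (t : ℂ) ^ 2) / (1 + t * z) := by
    rw [mobH, Complex.ofReal_neg, div_add' _ _ _ hz']
    congr 1; ring
  have hden : 1 + ((-t : ℝ) : ℂ) * mobH t z = (1 - (t : ℂ) ^ 2) / (1 + t * z) := by
    rw [mobH, Complex.ofReal_neg, mul_div_assoc', add_div' _ _ _ hz']
    congr 1; ring
  rw [mobH, hnum, hden, div_div_div_cancel_right₀ hz', mul_div_cancel_right₀ _ ht2]

theorem norm_mobH (ht : |t| < 1) (hz : ‖z‖ = 1) : ‖mobH t z‖ = 1 := by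
  have hconj : z * (starRingEnd ℂ) z = 1 := by
    rw [Complex.mul_conj, Complex.normSq_eq_norm_sq, hz]; norm_num
  have hnum : z + (t : ℂ) = z * (starRingEnd ℂ) (1 + t * z) := by
    simp only [map_add, map_one, map_mul, Complex.conj_ofReal]
    linear_combination (-(t : ℂ)) * hconj
  have hden := one_add_mul_ne_zero ht hz.le
  rw [mobH, norm_div, hnum, norm_mul, hz, one_mul, Complex.norm_conj,
    div_self (norm_ne_zero_iff.mpr hden)]

theorem norm_mobH_sub_mobH_le (ht : |t| < 1) (hu : ‖u‖ ≤ 1) (hw : ‖w‖ ≤ 1) :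
    ‖mobH t u - mobH t w‖ ≤ (1 + |t|) * ‖u - w‖ / ‖1 + (t : ℂ) * w‖ := by
  have hu_low := one_sub_abs_le_norm_one_add_mul (t := t) hu
  have hu_pos : 0 < ‖1 + (t : ℂ) * u‖ := norm_pos_iff.mpr (one_add_mul_ne_zero ht hu)
  have hw_pos : 0 < ‖1 + (t : ℂ) * w‖ := norm_pos_iff.mpr (one_add_mul_ne_zero ht hw)
  have ht2 : ‖1 - (t : ℂ) ^ 2‖ = (1 - |t|) * (1 + |t|) := by
    rw [← Complex.ofReal_pow, ← Complex.ofReal_one, ← Complex.ofReal_sub, Complex.norm_real,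
      Real.norm_eq_abs, ← sq_abs, abs_of_nonneg (by nlinarith [abs_nonneg t])]
    ring
  rw [mobH_sub_mobH (one_add_mul_ne_zero ht hu) (one_add_mul_ne_zero ht hw), norm_div, norm_mul,
    norm_mul, ht2, div_le_div_iff₀ (mul_pos hu_pos hw_pos) hw_pos]
  calc ‖u - w‖ * ((1 - |t|) * (1 + |t|)) * ‖1 + (t : ℂ) * w‖
      = (1 + |t|) * ‖u - w‖ * ((1 - |t|) * ‖1 + (t : ℂ) * w‖) := by ring
    _ ≤ (1 + |t|) * ‖u - w‖ * (‖1 + (t : ℂ) * u‖ * ‖1 + (t : ℂ) * w‖) := by gcongr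

theorem norm_sub_one_le_two_mul_norm_one_sub_mul (ht0 : 0 ≤ t) (ht1 : t ≤ 1) (hw : ‖w‖ = 1) :
    ‖w - 1‖ ≤ 2 * ‖1 - (t : ℂ) * w‖ := by
  have hlow : 1 - t ≤ ‖1 - (t : ℂ) * w‖ := by
    simpa [abs_of_nonneg ht0, ← sub_eq_add_neg] using
      one_sub_abs_le_norm_one_add_mul (t := -t) hw.le
  have hdist : ‖w - (t : ℂ) * w‖ = 1 - t := by
    rw [← one_sub_mul, norm_mul, hw, mul_one, ← Complex.ofReal_one, ← Complex.ofReal_sub,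
      Complex.norm_real, Real.norm_eq_abs, abs_of_nonneg (by linarith)]
  calc ‖w - 1‖ ≤ ‖w - (t : ℂ) * w‖ + ‖(t : ℂ) * w - 1‖ := norm_sub_le_norm_sub_add_norm_sub _ _ _
    _ ≤ 2 * ‖1 - (t : ℂ) * w‖ := by rw [hdist, norm_sub_rev]; linarith

end Mobius

open Mobius in
theorem stmt_18_general (α C : ℝ) (hα : 0 < α) (hC : 0 ≤ C)
    (ψ : ℂ → ℂ) (hmaps : ∀ ζ : ℂ, ‖ζ‖ = 1 → ‖ψ ζ‖ = 1)
    (hψ : ∀ ζ : ℂ, ‖ζ‖ = 1 →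
      ‖ψ ζ - ζ‖ ≤ C * (‖ζ - 1‖) ^ (α + 1)) :
    ∀ t : ℝ, 0 ≤ t → t < 1 → ∀ ζ : ℂ, ‖ζ‖ = 1 →
      ‖mobH (-t) (ψ (mobH t ζ)) - ζ‖ ≤
        4 * C * (‖mobH t ζ - 1‖) ^ α := by
  intro t ht0 ht1 ζ hζ
  have ht : |t| < 1 := by rwa [abs_of_nonneg ht0]
  set w := mobH t ζ
  have hw : ‖w‖ = 1 := norm_mobH ht hζ
  have hden : 0 < ‖1 - (t : ℂ) * w‖ := by
    simpa [← sub_eq_add_neg] using norm_pos_iff.mpr (one_add_mul_ne_zero (t := -t) (by simpa) hw.le)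
  have hψw : ‖ψ w - w‖ ≤ 2 * C * ‖w - 1‖ ^ α * ‖1 - (t : ℂ) * w‖ :=
    calc ‖ψ w - w‖ ≤ C * ‖w - 1‖ ^ (α + 1) := hψ w hw
      _ = C * ‖w - 1‖ ^ α * ‖w - 1‖ := by rw [Real.rpow_add_one' (norm_nonneg _) (by linarith)]; ring
      _ ≤ C * ‖w - 1‖ ^ α * (2 * ‖1 - (t : ℂ) * w‖) := by
        gcongr
        exact norm_sub_one_le_two_mul_norm_one_sub_mul ht0 ht1.le hw
      _ = 2 * C * ‖w - 1‖ ^ α * ‖1 - (t : ℂ) * w‖ := by ring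
  calc ‖mobH (-t) (ψ w) - ζ‖ = ‖mobH (-t) (ψ w) - mobH (-t) w‖ := by rw [mobH_neg_mobH ht hζ.le]
    _ ≤ (1 + t) * ‖ψ w - w‖ / ‖1 - (t : ℂ) * w‖ := by
      simpa [abs_of_nonneg ht0, ← sub_eq_add_neg] using
        norm_mobH_sub_mobH_le (t := -t) (by simpa) (hmaps w hw).le hw.le
    _ ≤ (1 + t) * (2 * C * ‖w - 1‖ ^ α * ‖1 - (t : ℂ) * w‖) / ‖1 - (t : ℂ) * w‖ := by gcongr
    _ = (1 + t) * (2 * C * ‖w - 1‖ ^ α) := by rw [mul_div_assoc, mul_div_cancel_right₀ _ hden.ne']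
    _ ≤ 4 * C * ‖w - 1‖ ^ α := by nlinarith [mul_nonneg hC (Real.rpow_nonneg (norm_nonneg (w - 1)) α)]

/-- Let `α ∈ (0,1)`, `C ≥ 0`, and let `ψ : S¹ → S¹` satisfy
`|ψ(ζ) − ζ| ≤ C·|ζ − 1|^(α+1)` on `S¹`.  Then for every `t ∈ [0,1)` and every
`ζ ∈ S¹`, setting `ω = h_t(ζ)`, one has `|h_t⁻¹(ψ(ω)) − ζ| ≤ 4C·|ω − 1|^α`. -/
theorem stmt_18 (α C : ℝ) (hα : 0 < α) (hα1 : α < 1) (hC : 0 ≤ C)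
    (ψ : ℂ → ℂ) (hmaps : ∀ ζ : ℂ, ‖ζ‖ = 1 → ‖ψ ζ‖ = 1)
    (hψ : ∀ ζ : ℂ, ‖ζ‖ = 1 →
      ‖ψ ζ - ζ‖ ≤ C * (‖ζ - 1‖) ^ (α + 1)) :
    ∀ t : ℝ, 0 ≤ t → t < 1 → ∀ ζ : ℂ, ‖ζ‖ = 1 →
      ‖mobH (-t) (ψ (mobH t ζ)) - ζ‖ ≤
        4 * C * (‖mobH t ζ - 1‖) ^ α :=
  stmt_18_general α C hα hC ψ hmaps hψ
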